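/- arXiv:2103.13534 — 2 statements merged into one kernel-verified Lean document; each statement's English description precedes it below -/
import Mathlib

section
/- Let X, Y, X_h, Y_h be normed spaces, A : D ⊂ X → Y linear with bounded linear solution operator E : Y → X satisfying EA = I, and for each h > 0 let A_h : X_h → Y_h be linear with solution operator E_h, and r_h : X → X_h, s_h : Y → Y_h bounded linear restriction maps. Suppose the method is consistent at u = Ef, i.e. lim_{h→0} ‖A_h r_h u − s_h A u‖ = 0, and stable, i.e. there exists K such that ‖E_h‖ ≤ K for all h, and for each h, r_h u = E_h A_h r_h u. Then the method is convergent: lim_{h→0} ‖r_h E f − E_h s_h f‖ = 0. -/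
open Filter Topology

/-- **Lax equivalence theorem**: consistency and stability imply convergence. -/
theorem lax_equivalence
    {X Y : Type*} [NormedAddCommGroup X] [NormedSpace ℝ X]
    [NormedAddCommGroup Y] [NormedSpace ℝ Y]
    (Xh Yh : ℝ → Type*)
    [∀ h, NormedAddCommGroup (Xh h)] [∀ h, NormedSpace ℝ (Xh h)]
    [∀ h, NormedAddCommGroup (Yh h)] [∀ h, NormedSpace ℝ (Yh h)]
    (A : X →ₗ[ℝ] Y) (E : Y →L[ℝ] X)
    (Ah : ∀ h : ℝ, Xh h →ₗ[ℝ] Yh h) (Eh : ∀ h : ℝ, Yh h →L[ℝ] Xh h)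
    (rh : ∀ h : ℝ, X →L[ℝ] Xh h) (sh : ∀ h : ℝ, Y →L[ℝ] Yh h)
    (f : Y) (u : X) (hu : u = E f) (hEA : A u = f)
    (consistency :
      Tendsto (fun h : ℝ => ‖Ah h (rh h u) - sh h (A u)‖) (𝓝[>] 0) (𝓝 0))
    (stability : ∃ K : ℝ, ∀ h : ℝ, ‖Eh h‖ ≤ K)
    (hEhAh : ∀ h : ℝ, rh h u = Eh h (Ah h (rh h u))) :
    Tendsto (fun h : ℝ => ‖rh h (E f) - Eh h (sh h f)‖) (𝓝[>] 0) (𝓝 0) := by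
  obtain ⟨K, hK⟩ := stability
  have key : ∀ h : ℝ, ‖rh h (E f) - Eh h (sh h f)‖ ≤ K * ‖Ah h (rh h u) - sh h (A u)‖ := by
    intro h
    have : rh h (E f) - Eh h (sh h f) = Eh h (Ah h (rh h u) - sh h (A u)) := by
      rw [map_sub, ← hEhAh h, ← hu, hEA]
    rw [this]
    calc ‖Eh h (Ah h (rh h u) - sh h (A u))‖
        ≤ ‖Eh h‖ * ‖Ah h (rh h u) - sh h (A u)‖ := (Eh h).le_opNorm _
      _ ≤ K * ‖Ah h (rh h u) - sh h (A u)‖ := by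
          gcongr; exact hK h
  have hlim : Tendsto (fun h : ℝ => K * ‖Ah h (rh h u) - sh h (A u)‖) (𝓝[>] 0) (𝓝 0) := by
    simpa using consistency.const_mul K
  exact squeeze_zero (fun h => norm_nonneg _) key hlim
end

section
/- Fix L > 0 and let h = L/(N+1) for a natural number N ≥ 3. Let λ_min(N) = (2/h²)·(−1 + cos(π/(N+1))) be the smallest-magnitude eigenvalue of the N×N matrix A_h(1/h², −2/h², 1/h²). Then 1/|λ_min(N)| ≤ L²/4. -/
open Real

/-- Uniform bound on the reciprocal of the smallest-magnitude eigenvalue of the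
discrete Laplacian `A_h(1/h², −2/h², 1/h²)` with `h = L/(N+1)`. -/
theorem spectral_bound (L : ℝ) (hL : 0 < L) (N : ℕ) (hN : 3 ≤ N) :
    1 / |(2 / (L / (N + 1)) ^ 2) * (-1 + Real.cos (π / (N + 1)))| ≤ L ^ 2 / 4 := by
  have hπ := Real.pi_pos
  set n : ℝ := (N : ℝ) + 1 with hn
  have hn4 : (4:ℝ) ≤ n := by
    have : (3:ℝ) ≤ (N:ℝ) := by exact_mod_cast hN
    simp only [hn]; linarith
  have hnpos : (0:ℝ) < n := by linarith
  set x : ℝ := π / (2 * n) with hx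
  have hxpos : 0 < x := by positivity
  have hx2 : x ≤ π / 2 := by
    rw [hx, div_le_div_iff₀ (by linarith) (by norm_num)]
    nlinarith
  have jordan : 2 / π * x ≤ Real.sin x := Real.mul_le_sin hxpos.le hx2
  have hval : 2 / π * x = 1 / n := by
    rw [hx]; field_simp
  have hsinpos : 0 < Real.sin x := lt_of_lt_of_le (by rw [hval]; positivity) jordan
  have h2x : 2 * x = π / n := by rw [hx]; field_simp
  have hcos : Real.cos (π / n) = 1 - 2 * Real.sin x ^ 2 := by
    rw [← h2x, Real.cos_two_mul', Real.cos_sq']; ring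
  have hsin_ge : 1 / n ≤ Real.sin x := hval ▸ jordan
  have h1 : 1 ≤ Real.sin x * n := by
    rwa [div_le_iff₀ hnpos] at hsin_ge
  have key : |(2 / (L / n) ^ 2) * (-1 + Real.cos (π / n))|
      = 4 * (Real.sin x * n) ^ 2 / L ^ 2 := by
    rw [hcos]
    rw [abs_of_nonpos (mul_nonpos_of_nonneg_of_nonpos (by positivity)
      (by nlinarith [sq_nonneg (Real.sin x)]))]
    field_simp
    ring
  rw [one_div, key, inv_div]
  gcongr
  nlinarith
end
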